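/- Let $\rho_{ij}=\rho_i\geq 1$ for all $j$ with $(i,j)\in\mathcal{A}$. Then $\chi(\rho) := \min\{\mathcal{I}(\nu)-\mathcal{S}(\nu) : \nu\in\Lambda(\rho)\}$ equals $\min\{\lambda(\rho)\log|\gamma| - \frac{1}{|\gamma|}\sum_{m=1}^{|\gamma|}\rho_{i_m}\log\rho_{i_m} : \gamma=(i_1,\dots,i_{|\gamma|},i_1)\in\Gamma(\rho)\}$, where $\Gamma(\rho)$ is the set of simple cycles $\gamma$ with $\langle\mu_\gamma,\rho\rangle=\lambda(\rho)$. -/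

import Mathlib

/-!
Write `I - S = F̃ + G̃`, where `F̃ ν = ∑ᵢ negMulLog (ρᵢ ν̄ᵢ)` is concave in `ν` and
`G̃ ν = ∑ (1 - ρᵢ) ν(i,j) log (ν(i,j) / ν̄ᵢ) ≥ 0` because `ρ ≥ 1`. On the uniform measure of a
simple cycle `G̃` vanishes and `F̃` is exactly the cycle value, so the cycle values are attained.
Conversely, every `ν ∈ M₁ˢ` is a convex combination of measures of simple cycles in its support
(peel off a multiple of one cycle until the lightest edge is exhausted), and when `ν ∈ Λ(ρ)` each
of these cycles is optimal, as `⟨·, ρ⟩` is linear and maximal at `ν`. By the minimum principle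
for concave functions `F̃ ν ≥ F̃ μ_γ` for one of these cycles `γ`, hence
`(I - S)(ν) ≥ F̃ ν ≥` its cycle value.
-/

/-- Probability measure on `T²` with equal marginals. -/
def memM1s {T : Type*} [Fintype T] (μ : T × T → ℝ) : Prop :=
  (∀ p, 0 ≤ μ p) ∧ (∑ p : T × T, μ p = 1) ∧
    ∀ i : T, ∑ j, μ (i, j) = ∑ j, μ (j, i)

/-- The uniform measure on the edges of a cycle `γ` of length `l + 1`,
given by the vertices `γ 0, γ 1, …, γ l` (addition in `Fin (l+1)` is cyclic). -/
noncomputable def cycleMeasure {T : Type*} [Fintype T] [DecidableEq T] {l : ℕ}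
    (γ : Fin (l + 1) → T) : T × T → ℝ :=
  fun p => if ∃ m, p = (γ m, γ (m + 1)) then ((l : ℝ) + 1)⁻¹ else 0

open Finset Real

lemma concaveOn_finset_sum {ι E : Type*} [AddCommGroup E] [Module ℝ E] {K : Set E}
    (hK : Convex ℝ K) {s : Finset ι} {f : ι → E → ℝ} (hf : ∀ i ∈ s, ConcaveOn ℝ K (f i)) :
    ConcaveOn ℝ K (fun x => ∑ i ∈ s, f i x) := by
  classical
  induction s using Finset.induction_on with
  | empty => simpa using concaveOn_const (0 : ℝ) hK
  | insert i s hi ih =>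
    simp_rw [Finset.sum_insert hi]
    exact (hf i (mem_insert_self i s)).add (ih fun j hj => hf j (mem_insert_of_mem hj))

lemma Function.exists_mem_periodicPts {α : Type*} [Finite α] [Nonempty α] (f : α → α) :
    ∃ x, x ∈ periodicPts f := by
  obtain ⟨a, b, hab, heq⟩ :=
    Finite.exists_ne_map_eq_of_infinite fun n : ℕ => f^[n] (Classical.arbitrary α)
  wlog h : a < b generalizing a b
  · exact this b a hab.symm heq.symm (by omega)
  refine ⟨f^[a] (Classical.arbitrary α), mk_mem_periodicPts (Nat.sub_pos_of_lt h) ?_⟩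
  change f^[b - a] (f^[a] _) = _
  rw [← iterate_add_apply, Nat.sub_add_cancel h.le, heq]

lemma Function.exists_injective_cycle {α : Type*} [Finite α] [Nonempty α] (f : α → α) :
    ∃ (l : ℕ) (γ : Fin (l + 1) → α), Injective γ ∧ ∀ m, γ (m + 1) = f (γ m) := by
  obtain ⟨x, hx⟩ := exists_mem_periodicPts f
  obtain ⟨l, hl⟩ := Nat.exists_eq_add_one_of_ne_zero (minimalPeriod_pos_of_mem_periodicPts hx).ne'
  refine ⟨l, fun m => f^[m] x, fun m m' h => Fin.ext ?_, fun m => ?_⟩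
  · exact iterate_injOn_Iio_minimalPeriod (by rw [Set.mem_Iio, hl]; exact m.2)
      (by rw [Set.mem_Iio, hl]; exact m'.2) h
  · have : ((m + 1 : Fin (l + 1)) : ℕ) = (m + 1) % minimalPeriod f x := by
      rw [Fin.val_add, Fin.val_one', Nat.add_mod_mod, hl]
    simp only [this, iterate_mod_minimalPeriod_eq, iterate_succ_apply']

section
variable {T : Type*} [Fintype T]

def marginal (ν : T × T → ℝ) (i : T) : ℝ := ∑ j, ν (i, j)

lemma sum_mul_fst_eq_sum_marginal_mul {A : Finset (T × T)} {ν : T × T → ℝ}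
    (hA : ∀ p ∉ A, ν p = 0) (f : T → ℝ) :
    ∑ p ∈ A, ν p * f p.1 = ∑ i, marginal ν i * f i := by
  rw [sum_subset (subset_univ A) fun p _ hp => by rw [hA p hp, zero_mul], Fintype.sum_prod_type]
  simp only [marginal, sum_mul]

lemma le_marginal {ν : T × T → ℝ} (hν : ∀ p, 0 ≤ ν p) (p : T × T) : ν p ≤ marginal ν p.1 :=
  single_le_sum (f := fun j => ν (p.1, j)) (fun _ _ => hν _) (mem_univ p.2)

lemma memM1s.eq_of_le {μ ν : T × T → ℝ} (hμ : memM1s μ) (hν : memM1s ν) (h : ∀ p, μ p ≤ ν p) :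
    μ = ν :=
  funext fun p => (sum_eq_sum_iff_of_le fun p _ => h p).1 (hμ.2.1.trans hν.2.1.symm) p (mem_univ p)

lemma memM1s.inv_one_sub_mul_sub {μ ν : T × T → ℝ} (hμ : memM1s μ) (hν : memM1s ν) {t : ℝ}
    (ht : t < 1) (hle : ∀ p, t * μ p ≤ ν p) :
    memM1s fun p => (1 - t)⁻¹ * (ν p - t * μ p) := by
  have h1t : 0 < 1 - t := by linarith
  refine ⟨fun p => mul_nonneg (inv_nonneg.2 h1t.le) (sub_nonneg.2 (hle p)), ?_, fun i => ?_⟩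
  · rw [← mul_sum, sum_sub_distrib, ← mul_sum, hμ.2.1, hν.2.1]
    field_simp
  · simp only [← mul_sum, sum_sub_distrib, hν.2.2 i, hμ.2.2 i]

lemma memM1s.exists_injective_cycle_pos {ν : T × T → ℝ} (hν : memM1s ν) :
    ∃ (l : ℕ) (γ : Fin (l + 1) → T), Function.Injective γ ∧ ∀ m, 0 < ν (γ m, γ (m + 1)) := by
  obtain ⟨hnn, hsum, hbal⟩ := hν
  let P : Set T := {i | ∃ j, 0 < ν (i, j)}
  -- a positive edge into `j` forces a positive edge out of `j`, by balance
  have hstep : ∀ i : P, ∃ j : P, 0 < ν (i, j) := by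
    rintro ⟨i, j, hij⟩
    have hj : ∑ _k : T, (0 : ℝ) < ∑ k, ν (j, k) := by
      rw [sum_const_zero, hbal]
      exact hij.trans_le (single_le_sum (fun k _ => hnn (k, j)) (mem_univ i))
    obtain ⟨k, -, hk⟩ := exists_lt_of_sum_lt hj
    exact ⟨⟨j, k, hk⟩, hij⟩
  choose f hf using hstep
  have : Nonempty P := by
    obtain ⟨p, -, hp⟩ := exists_lt_of_sum_lt (s := univ) (f := 0) (g := ν) (by simp [hsum])
    exact ⟨⟨p.1, p.2, hp⟩⟩
  obtain ⟨l, γ, hγ, hsucc⟩ := Function.exists_injective_cycle f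
  exact ⟨l, fun m => γ m, Subtype.val_injective.comp hγ, fun m => by simp only [hsucc]; exact hf _⟩

/-- `I(ν) - S(ν)` for `ρ_{ij} = ρ_i`. -/
noncomputable def iMinusS (A : Finset (T × T)) (ρ : T → ℝ) (ν : T × T → ℝ) : ℝ :=
  (∑ p ∈ A, ν p * log (ν p / marginal ν p.1)) -
    ((∑ p ∈ A, ρ p.1 * (ν p * log (ν p))) + ∑ p ∈ A, ν p * (ρ p.1 * log (ρ p.1)))

/-- The concave part `F̃` of `I - S`; note `negMulLog (ρ x) = ρ negMulLog x - ρ log ρ x`. -/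
noncomputable def marginalEntropy (ρ : T → ℝ) (ν : T × T → ℝ) : ℝ :=
  ∑ i, negMulLog (ρ i * marginal ν i)

lemma iMinusS_eq {A : Finset (T × T)} {ρ : T → ℝ} {ν : T × T → ℝ} (hρ : ∀ i, 0 < ρ i)
    (hν : ∀ p, 0 ≤ ν p) (hA : ∀ p ∉ A, ν p = 0) :
    iMinusS A ρ ν = marginalEntropy ρ ν +
      ∑ p ∈ A, (1 - ρ p.1) * (ν p * log (ν p / marginal ν p.1)) := by
  have key : ∀ p, ν p * log (ν p / marginal ν p.1) -
      (ρ p.1 * (ν p * log (ν p)) + ν p * (ρ p.1 * log (ρ p.1))) =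
      ν p * -(ρ p.1 * log (ρ p.1 * marginal ν p.1)) +
        (1 - ρ p.1) * (ν p * log (ν p / marginal ν p.1)) := by
    intro p
    rcases (hν p).eq_or_lt with h | h
    · simp [← h]
    · have hm : 0 < marginal ν p.1 := h.trans_le (le_marginal hν p)
      rw [log_div h.ne' hm.ne', log_mul (hρ _).ne' hm.ne']
      ring
  have hF : marginalEntropy ρ ν = ∑ p ∈ A, ν p * -(ρ p.1 * log (ρ p.1 * marginal ν p.1)) := by
    rw [sum_mul_fst_eq_sum_marginal_mul hA fun i => -(ρ i * log (ρ i * marginal ν i))]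
    exact sum_congr rfl fun i _ => by rw [negMulLog]; ring
  rw [hF, ← sum_add_distrib, ← sum_congr rfl fun p _ => key p, iMinusS, sum_sub_distrib,
    sum_add_distrib]

lemma marginalEntropy_le_iMinusS {A : Finset (T × T)} {ρ : T → ℝ} {ν : T × T → ℝ}
    (hρ : ∀ i, 1 ≤ ρ i) (hν : ∀ p, 0 ≤ ν p) (hA : ∀ p ∉ A, ν p = 0) :
    marginalEntropy ρ ν ≤ iMinusS A ρ ν := by
  rw [iMinusS_eq (fun i => one_pos.trans_le (hρ i)) hν hA, le_add_iff_nonneg_right]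
  refine sum_nonneg fun p _ => mul_nonneg_of_nonpos_of_nonpos (by linarith [hρ p.1]) ?_
  have hm : 0 ≤ marginal ν p.1 := (hν p).trans (le_marginal hν p)
  exact mul_nonpos_of_nonneg_of_nonpos (hν p)
    (log_nonpos (div_nonneg (hν p) hm) (div_le_one_of_le₀ (le_marginal hν p) hm))

lemma concaveOn_marginalEntropy {ρ : T → ℝ} (hρ : ∀ i, 0 ≤ ρ i) :
    ConcaveOn ℝ (Set.Ici 0) (marginalEntropy ρ : (T × T → ℝ) → ℝ) := by
  refine concaveOn_finset_sum (convex_Ici 0) fun i _ => ?_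
  let L : (T × T → ℝ) →ₗ[ℝ] ℝ := ρ i • ∑ j, LinearMap.proj (i, j)
  have hL : ∀ ν, L ν = ρ i * marginal ν i := fun ν => by simp [L, marginal]
  refine ((concaveOn_negMulLog.comp_linearMap L).subset (fun ν hν => ?_) (convex_Ici 0)).congr
    fun ν _ => by simp [hL]
  rw [Set.mem_preimage, hL, Set.mem_Ici]
  exact mul_nonneg (hρ i) (sum_nonneg fun j _ => hν (i, j))

/-- `⟨μ, ρ⟩` for `ρ_{ij} = ρ_i`. -/
def pairing (A : Finset (T × T)) (ρ : T → ℝ) (μ : T × T → ℝ) : ℝ := ∑ p ∈ A, μ p * ρ p.1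

def admissible (A : Finset (T × T)) : Set (T × T → ℝ) := {μ | memM1s μ ∧ ∀ p ∉ A, μ p = 0}

end

section
variable {T : Type*} [Fintype T] [DecidableEq T] {l : ℕ} {γ : Fin (l + 1) → T}

lemma cycleMeasure_nonneg (γ : Fin (l + 1) → T) (p : T × T) : 0 ≤ cycleMeasure γ p := by
  unfold cycleMeasure; split <;> positivity

lemma cycleMeasure_edge (γ : Fin (l + 1) → T) (m : Fin (l + 1)) :
    cycleMeasure γ (γ m, γ (m + 1)) = ((l : ℝ) + 1)⁻¹ :=
  if_pos ⟨m, rfl⟩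

lemma cycleMeasure_eq_zero {p : T × T} (hp : ∀ m, p ≠ (γ m, γ (m + 1))) :
    cycleMeasure γ p = 0 :=
  if_neg fun ⟨m, hm⟩ => hp m hm

lemma sum_cycleMeasure_mul (hγ : Function.Injective γ) {s : Finset (T × T)}
    (hs : ∀ m, (γ m, γ (m + 1)) ∈ s) (g : T × T → ℝ) :
    ∑ p ∈ s, cycleMeasure γ p * g p = ((l : ℝ) + 1)⁻¹ * ∑ m, g (γ m, γ (m + 1)) := by
  rw [mul_sum]
  refine (sum_of_injOn (fun m => (γ m, γ (m + 1))) (fun m _ m' _ h => hγ (congrArg Prod.fst h))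
    (fun m _ => hs m) (fun p _ hp => ?_) fun m _ => by rw [cycleMeasure_edge]).symm
  rw [cycleMeasure_eq_zero fun m hm => hp ⟨m, mem_coe.2 (mem_univ m), hm.symm⟩, zero_mul]

lemma marginal_cycleMeasure (hγ : Function.Injective γ) (i : T) :
    marginal (cycleMeasure γ) i = ((l : ℝ) + 1)⁻¹ * ∑ m, if γ m = i then 1 else 0 := by
  have hrow : ∑ p, cycleMeasure γ p * (if p.1 = i then 1 else 0) = marginal (cycleMeasure γ) i := by
    rw [Fintype.sum_prod_type]; simp [marginal]
  rw [← hrow, sum_cycleMeasure_mul hγ fun m => mem_univ _]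

lemma sum_cycleMeasure_snd (hγ : Function.Injective γ) (i : T) :
    ∑ j, cycleMeasure γ (j, i) = ((l : ℝ) + 1)⁻¹ * ∑ m, if γ m = i then 1 else 0 := by
  have hcol : ∑ p, cycleMeasure γ p * (if p.2 = i then 1 else 0) = ∑ j, cycleMeasure γ (j, i) := by
    rw [Fintype.sum_prod_type_right]; simp
  rw [← hcol, sum_cycleMeasure_mul hγ fun m => mem_univ _,
    ← Equiv.sum_comp (Equiv.addRight 1) fun m => if γ m = i then (1 : ℝ) else 0]
  rfl

lemma cycleMeasure_memM1s (hγ : Function.Injective γ) : memM1s (cycleMeasure γ) := by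
  refine ⟨cycleMeasure_nonneg γ, ?_, fun i => ?_⟩
  · have := sum_cycleMeasure_mul hγ (fun m => mem_univ _) fun _ => 1
    simp only [mul_one, sum_const, card_univ, Fintype.card_fin] at this
    rw [this, nsmul_one]; push_cast; field_simp
  · exact (marginal_cycleMeasure hγ i).trans (sum_cycleMeasure_snd hγ i).symm

lemma marginal_cycleMeasure_apply (hγ : Function.Injective γ) (m : Fin (l + 1)) :
    marginal (cycleMeasure γ) (γ m) = ((l : ℝ) + 1)⁻¹ := by
  simp [marginal_cycleMeasure hγ, hγ.eq_iff]

lemma marginal_cycleMeasure_of_forall_ne (hγ : Function.Injective γ) {i : T}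
    (hi : ∀ m, γ m ≠ i) : marginal (cycleMeasure γ) i = 0 := by
  simp [marginal_cycleMeasure hγ, hi]

lemma cycleMeasure_eq_zero_of_notMem {A : Finset (T × T)} (hA : ∀ m, (γ m, γ (m + 1)) ∈ A) :
    ∀ p ∉ A, cycleMeasure γ p = 0 :=
  fun _ hp => cycleMeasure_eq_zero fun m hm => hp (hm ▸ hA m)

lemma cycleMeasure_mem_admissible {A : Finset (T × T)} (hγ : Function.Injective γ)
    (hA : ∀ m, (γ m, γ (m + 1)) ∈ A) : cycleMeasure γ ∈ admissible A :=
  ⟨cycleMeasure_memM1s hγ, cycleMeasure_eq_zero_of_notMem hA⟩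

lemma cycleMeasure_mul_log_div_marginal (hγ : Function.Injective γ) (p : T × T) :
    cycleMeasure γ p * log (cycleMeasure γ p / marginal (cycleMeasure γ) p.1) = 0 := by
  by_cases hp : ∃ m, p = (γ m, γ (m + 1))
  · obtain ⟨m, rfl⟩ := hp
    rw [cycleMeasure_edge, marginal_cycleMeasure_apply hγ, div_self (by positivity), log_one,
      mul_zero]
  · rw [cycleMeasure_eq_zero (not_exists.1 hp), zero_mul]

noncomputable def cycleValue (ρ : T → ℝ) (lam : ℝ) (γ : Fin (l + 1) → T) : ℝ :=
  lam * log ((l : ℝ) + 1) - ((l : ℝ) + 1)⁻¹ * ∑ m, ρ (γ m) * log (ρ (γ m))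

lemma marginalEntropy_cycleMeasure (hγ : Function.Injective γ) {A : Finset (T × T)}
    (hA : ∀ m, (γ m, γ (m + 1)) ∈ A) (ρ : T → ℝ) :
    marginalEntropy ρ (cycleMeasure γ) = cycleValue ρ (pairing A ρ (cycleMeasure γ)) γ := by
  have hterm : ∀ r : ℝ, negMulLog (r * ((l : ℝ) + 1)⁻¹) =
      r * log ((l : ℝ) + 1) * ((l : ℝ) + 1)⁻¹ - ((l : ℝ) + 1)⁻¹ * (r * log r) := by
    intro r
    rcases eq_or_ne r 0 with rfl | hr
    · simp
    · rw [negMulLog, log_mul hr (by positivity), log_inv]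
      ring
  have hsum : marginalEntropy ρ (cycleMeasure γ) = ∑ m, negMulLog (ρ (γ m) * ((l : ℝ) + 1)⁻¹) :=
    (Fintype.sum_of_injective γ hγ _ _ (fun i hi => by
      rw [marginal_cycleMeasure_of_forall_ne hγ fun m hm => hi ⟨m, hm⟩, mul_zero, negMulLog_zero])
      fun m => by rw [marginal_cycleMeasure_apply hγ]).symm
  rw [hsum, pairing, sum_cycleMeasure_mul hγ hA, cycleValue]
  simp only [hterm, sum_sub_distrib, ← sum_mul, ← mul_sum]
  ring

lemma iMinusS_cycleMeasure (hγ : Function.Injective γ) {A : Finset (T × T)}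
    (hA : ∀ m, (γ m, γ (m + 1)) ∈ A) {ρ : T → ℝ} (hρ : ∀ i, 0 < ρ i) {lam : ℝ}
    (hopt : pairing A ρ (cycleMeasure γ) = lam) :
    iMinusS A ρ (cycleMeasure γ) = cycleValue ρ lam γ := by
  rw [iMinusS_eq hρ (cycleMeasure_nonneg γ) (cycleMeasure_eq_zero_of_notMem hA),
    marginalEntropy_cycleMeasure hγ hA, hopt]
  simp [cycleMeasure_mul_log_div_marginal hγ]

lemma memM1s.exists_eq_smul_cycleMeasure_add {ν : T × T → ℝ} (hν : memM1s ν)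
    (hγ : Function.Injective γ) (hpos : ∀ m, 0 < ν (γ m, γ (m + 1))) :
    ∃ (t : ℝ) (ν' : T × T → ℝ), 0 < t ∧ t ≤ 1 ∧ memM1s ν' ∧
      Function.support ν' ⊆ Function.support ν ∧ ν = t • cycleMeasure γ + (1 - t) • ν' ∧
      (t < 1 → Function.support ν' ⊂ Function.support ν) := by
  -- `t` is chosen so that `t • cycleMeasure γ` exhausts the lightest edge of the cycle
  obtain ⟨m₀, -, hm₀⟩ := exists_min_image univ (fun m => ν (γ m, γ (m + 1))) univ_nonempty
  set t := ((l : ℝ) + 1) * ν (γ m₀, γ (m₀ + 1)) with ht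
  have ht0 : 0 < t := mul_pos (by positivity) (hpos m₀)
  have hedge : ∀ m, t * cycleMeasure γ (γ m, γ (m + 1)) = ν (γ m₀, γ (m₀ + 1)) := fun m => by
    rw [cycleMeasure_edge, ht, mul_right_comm, mul_inv_cancel₀ (by positivity), one_mul]
  have hle : ∀ p, t * cycleMeasure γ p ≤ ν p := by
    intro p
    by_cases hp : ∃ m, p = (γ m, γ (m + 1))
    · obtain ⟨m, rfl⟩ := hp
      exact (hedge m).trans_le (hm₀ m (mem_univ m))
    · rw [cycleMeasure_eq_zero (not_exists.1 hp), mul_zero]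
      exact hν.1 p
  have hμ := cycleMeasure_memM1s hγ
  have ht1 : t ≤ 1 := by
    simpa [← mul_sum, hμ.2.1, hν.2.1] using sum_le_sum (s := univ) fun p _ => hle p
  rcases ht1.lt_or_eq with ht1 | ht1
  · set ν' := fun p => (1 - t)⁻¹ * (ν p - t * cycleMeasure γ p)
    have hsub : Function.support ν' ⊆ Function.support ν := fun p hp h0 => hp (by
      have : cycleMeasure γ p = 0 :=
        le_antisymm (nonpos_of_mul_nonpos_right (h0 ▸ hle p) ht0) (cycleMeasure_nonneg γ p)
      simp [ν', h0, this])
    refine ⟨t, ν', ht0, ht1.le, hμ.inv_one_sub_mul_sub hν ht1 hle, hsub, ?_, fun _ => ?_⟩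
    · funext p
      simp only [ν', Pi.add_apply, Pi.smul_apply, smul_eq_mul]
      field_simp [(sub_pos.2 ht1).ne']
      ring
    · refine Set.ssubset_iff_subset_ne.2 ⟨hsub, fun h => ?_⟩
      have hm : (γ m₀, γ (m₀ + 1)) ∈ Function.support ν' := h ▸ (hpos m₀).ne'
      simp [ν', hedge] at hm
  · have hνμ : ν = cycleMeasure γ := (hμ.eq_of_le hν fun p => by simpa [ht1] using hle p).symm
    exact ⟨1, ν, one_pos, le_rfl, hν, subset_rfl, by simp [← hνμ], fun h => absurd h (lt_irrefl 1)⟩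

def cycleMeasures (E : Set (T × T)) : Set (T × T → ℝ) :=
  {μ | ∃ (l : ℕ) (γ : Fin (l + 1) → T), Function.Injective γ ∧ (∀ m, (γ m, γ (m + 1)) ∈ E) ∧
    cycleMeasure γ = μ}

lemma cycleMeasures_mono {E F : Set (T × T)} (h : E ⊆ F) : cycleMeasures E ⊆ cycleMeasures F :=
  fun _ ⟨l, γ, hγ, hE, hμ⟩ => ⟨l, γ, hγ, fun m => h (hE m), hμ⟩

lemma memM1s.mem_convexHull_cycleMeasures {ν : T × T → ℝ} (hν : memM1s ν) :
    ν ∈ convexHull ℝ (cycleMeasures (Function.support ν)) := by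
  induction hn : (Function.support ν).ncard using Nat.strong_induction_on generalizing ν with
  | _ n ih =>
  obtain ⟨l, γ, hγ, hpos⟩ := hν.exists_injective_cycle_pos
  have hmem : cycleMeasure γ ∈ cycleMeasures (Function.support ν) :=
    ⟨l, γ, hγ, fun m => (hpos m).ne', rfl⟩
  obtain ⟨t, ν', ht0, ht1, hν', hsub, hdec, hlt⟩ := hν.exists_eq_smul_cycleMeasure_add hγ hpos
  rcases ht1.lt_or_eq with ht1 | rfl
  · have hν'mem := ih _ (hn ▸ Set.ncard_lt_ncard (hlt ht1)) hν' rfl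
    have hcomb : t • cycleMeasure γ + (1 - t) • ν' ∈
        convexHull ℝ (cycleMeasures (Function.support ν)) :=
      convex_convexHull ℝ _ (subset_convexHull ℝ _ hmem)
        (convexHull_mono (cycleMeasures_mono hsub) hν'mem) ht0.le (by linarith) (by ring)
    rwa [← hdec] at hcomb
  · have hνμ : ν = cycleMeasure γ := by simpa using hdec
    rw [hνμ] at hmem ⊢
    exact subset_convexHull ℝ _ hmem

lemma cycleMeasures_support_subset {A : Finset (T × T)} {ρ : T → ℝ} {lam : ℝ}
    (hlam : lam ∈ upperBounds (pairing A ρ '' admissible A)) {ν : T × T → ℝ}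
    (hν : ν ∈ admissible A) (hopt : pairing A ρ ν = lam) :
    cycleMeasures (Function.support ν) ⊆ cycleMeasures A ∩ {μ | pairing A ρ μ = lam} := by
  rintro _ ⟨l, γ, hγ, hsupp, rfl⟩
  have hpos : ∀ m, 0 < ν (γ m, γ (m + 1)) := fun m => (hν.1.1 _).lt_of_ne' (hsupp m)
  have hA : ∀ m, (γ m, γ (m + 1)) ∈ A := fun m => by_contra fun h => hsupp m (hν.2 _ h)
  obtain ⟨t, ν', ht0, ht1, hν', hsub, hdec, -⟩ := hν.1.exists_eq_smul_cycleMeasure_add hγ hpos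
  have hμle : pairing A ρ (cycleMeasure γ) ≤ lam := hlam ⟨_, cycleMeasure_mem_admissible hγ hA, rfl⟩
  have hν'le : pairing A ρ ν' ≤ lam := hlam ⟨ν', ⟨hν', Function.support_subset_iff'.1
    (hsub.trans (Function.support_subset_iff'.2 hν.2))⟩, rfl⟩
  have hsplit : pairing A ρ ν = t * pairing A ρ (cycleMeasure γ) + (1 - t) * pairing A ρ ν' := by
    rw [hdec]
    simp only [pairing, Pi.add_apply, Pi.smul_apply, smul_eq_mul, add_mul, sum_add_distrib,
      mul_sum, mul_assoc]
  refine ⟨⟨l, γ, hγ, hA, rfl⟩, le_antisymm hμle ?_⟩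
  nlinarith

lemma exists_cycleValue_le_iMinusS {A : Finset (T × T)} {ρ : T → ℝ} (hρ : ∀ i, 1 ≤ ρ i)
    {lam : ℝ} (hlam : lam ∈ upperBounds (pairing A ρ '' admissible A)) {ν : T × T → ℝ}
    (hν : ν ∈ admissible A) (hopt : pairing A ρ ν = lam) :
    ∃ (l : ℕ) (γ : Fin (l + 1) → T), Function.Injective γ ∧ (∀ m, (γ m, γ (m + 1)) ∈ A) ∧
      pairing A ρ (cycleMeasure γ) = lam ∧ cycleValue ρ lam γ ≤ iMinusS A ρ ν := by
  have hhull : ν ∈ convexHull ℝ (cycleMeasures A ∩ {μ | pairing A ρ μ = lam}) :=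
    convexHull_mono (cycleMeasures_support_subset hlam hν hopt)
      hν.1.mem_convexHull_cycleMeasures
  obtain ⟨_, ⟨⟨l, γ, hγ, hA, rfl⟩, hγopt⟩, hle⟩ :=
    (concaveOn_marginalEntropy fun i => zero_le_one.trans (hρ i)).exists_le_of_mem_convexHull
      (by rintro _ ⟨⟨_, γ, -, -, rfl⟩, -⟩; exact cycleMeasure_nonneg γ) hhull
  refine ⟨l, γ, hγ, hA, hγopt, ?_⟩
  calc cycleValue ρ lam γ = marginalEntropy ρ (cycleMeasure γ) := by
        rw [marginalEntropy_cycleMeasure hγ hA, hγopt]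
    _ ≤ marginalEntropy ρ ν := hle
    _ ≤ iMinusS A ρ ν := marginalEntropy_le_iMinusS hρ hν.1.1 hν.2

end

open Finset in
theorem stmt17_general {T : Type*} [Fintype T] [DecidableEq T]
    (A : Finset (T × T))
    (ρ : T → ℝ) (hρ : ∀ i, 1 ≤ ρ i) (lam : ℝ)
    (hlam : IsGreatest ((fun μ : T × T → ℝ => ∑ p ∈ A, μ p * ρ p.1) ''
      {μ : T × T → ℝ | memM1s μ ∧ ∀ p ∉ A, μ p = 0}) lam) :
    sInf {v : ℝ | ∃ ν : T × T → ℝ, memM1s ν ∧ (∀ p ∉ A, ν p = 0) ∧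
        (∑ p ∈ A, ν p * ρ p.1) = lam ∧
        v = (∑ p ∈ A, ν p * Real.log (ν p / ∑ k : T, ν (p.1, k))) -
          ((∑ p ∈ A, ρ p.1 * (ν p * Real.log (ν p))) +
            ∑ p ∈ A, ν p * (ρ p.1 * Real.log (ρ p.1)))} =
      sInf {v : ℝ | ∃ (l : ℕ) (γ : Fin (l + 1) → T), Function.Injective γ ∧
        (∀ m, (γ m, γ (m + 1)) ∈ A) ∧
        (∑ p ∈ A, cycleMeasure γ p * ρ p.1) = lam ∧
        v = lam * Real.log ((l : ℝ) + 1) -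
          ((l : ℝ) + 1)⁻¹ * ∑ m : Fin (l + 1), ρ (γ m) * Real.log (ρ (γ m))} := by
  refine csInf_eq_csInf_of_forall_exists_le ?_ ?_
  · rintro _ ⟨ν, hν, hA, hopt, rfl⟩
    obtain ⟨l, γ, hγ, hγA, hγopt, hle⟩ := exists_cycleValue_le_iMinusS hρ hlam.2 ⟨hν, hA⟩ hopt
    exact ⟨_, ⟨l, γ, hγ, hγA, hγopt, rfl⟩, hle⟩
  · rintro _ ⟨l, γ, hγ, hA, hopt, rfl⟩
    refine ⟨_, ⟨cycleMeasure γ, cycleMeasure_memM1s hγ, cycleMeasure_eq_zero_of_notMem hA, hopt,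
      rfl⟩, ?_⟩
    exact (iMinusS_cycleMeasure hγ hA (fun i => one_pos.trans_le (hρ i)) hopt).le

open Finset in
/-- Case `ρ_{ij} = ρ_i ≥ 1`.  With `lam = λ(ρ)` the maximal value of
`⟨μ,ρ⟩ = ∑_{(i,j)∈A} μ(i,j) ρ_i` over probability measures with equal marginals, the
minimum of `I(ν) - S(ν)` over the maximizers `ν ∈ Λ(ρ)` (supported on `A`) equals the
minimum over the optimal simple cycles `γ ∈ Γ(ρ)` of
`λ(ρ) log |γ| - |γ|⁻¹ ∑_m ρ_{i_m} log ρ_{i_m}`. -/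
theorem stmt17 {T : Type*} [Fintype T] [DecidableEq T] [Nonempty T]
    (A : Finset (T × T)) (hout : ∀ i : T, ∃ j, (i, j) ∈ A)
    (ρ : T → ℝ) (hρ : ∀ i, 1 ≤ ρ i) (lam : ℝ)
    (hlam : IsGreatest ((fun μ : T × T → ℝ => ∑ p ∈ A, μ p * ρ p.1) ''
      {μ : T × T → ℝ | memM1s μ ∧ ∀ p ∉ A, μ p = 0}) lam) :
    sInf {v : ℝ | ∃ ν : T × T → ℝ, memM1s ν ∧ (∀ p ∉ A, ν p = 0) ∧
        (∑ p ∈ A, ν p * ρ p.1) = lam ∧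
        v = (∑ p ∈ A, ν p * Real.log (ν p / ∑ k : T, ν (p.1, k))) -
          ((∑ p ∈ A, ρ p.1 * (ν p * Real.log (ν p))) +
            ∑ p ∈ A, ν p * (ρ p.1 * Real.log (ρ p.1)))} =
      sInf {v : ℝ | ∃ (l : ℕ) (γ : Fin (l + 1) → T), Function.Injective γ ∧
        (∀ m, (γ m, γ (m + 1)) ∈ A) ∧
        (∑ p ∈ A, cycleMeasure γ p * ρ p.1) = lam ∧
        v = lam * Real.log ((l : ℝ) + 1) -
          ((l : ℝ) + 1)⁻¹ * ∑ m : Fin (l + 1), ρ (γ m) * Real.log (ρ (γ m))} :=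
  stmt17_general A ρ hρ lam hlam
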